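/- arXiv:2206.08060 — 5 statements merged into one kernel-verified Lean document; each statement's English description precedes it below -/
import Mathlib

section
/- Let K/L be a field extension, and let f = a_{n_0} t^{n_0} + a_{n_1} t^{n_1} + ... be an element of the Laurent series field K((t)) that is algebraic over the subfield L((t)). Then every coefficient a_{n_i} of f is algebraic over L. -/
/-!
If a coefficient `a` of `f` were transcendental over `L`, then, extending `{a}` to a transcendence
basis of `K/L`, every substitution `a ↦ a ^ (m + 1)` would extend to an `L`-embedding `σₘ` of `K`
into an algebraic closure `Ω` of `K`.  Applied coefficientwise, each `σₘ` sends `f` to a root in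
`Ω((t))` of the nonzero polynomial over `L((t))` that `f` satisfies, and these roots are pairwise
distinct because their coefficients at the position of `a` are the distinct powers `a ^ (m + 1)`.
-/

/-- The ring homomorphism between Laurent series fields induced by applying a ring
homomorphism to each coefficient. -/
noncomputable def LaurentSeries.mapRingHom {R S : Type*} [CommRing R] [CommRing S]
    (f : R →+* S) : LaurentSeries R →+* LaurentSeries S where
  toFun x := x.map f
  map_one' := HahnSeries.map_one f.toMonoidWithZeroHom
  map_mul' x y := HahnSeries.map_mul (f : R →ₙ+* S)
  map_zero' := by ext; simp
  map_add' x y := HahnSeries.map_add (f : R →+ S)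

open Polynomial

namespace LaurentSeries

@[simp]
lemma mapRingHom_coeff {R S : Type*} [CommRing R] [CommRing S] (f : R →+* S)
    (x : LaurentSeries R) (d : ℤ) : (mapRingHom f x).coeff d = f (x.coeff d) :=
  rfl

lemma mapRingHom_comp {R S T : Type*} [CommRing R] [CommRing S] [CommRing T]
    (g : S →+* T) (f : R →+* S) : (mapRingHom g).comp (mapRingHom f) = mapRingHom (g.comp f) :=
  rfl

end LaurentSeries

open LaurentSeries

lemma Transcendental.injective_pow {R A : Type*} [CommRing R] [Nontrivial R] [CommRing A]
    [Algebra R A] {a : A} (ha : Transcendental R a) : Function.Injective (a ^ · : ℕ → A) := by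
  intro i j hij
  by_contra hne
  refine ha ⟨X ^ i - X ^ j, sub_ne_zero.2 ?_, by simpa [sub_eq_zero] using hij⟩
  exact fun h => hne (by simpa using congrArg natDegree h)

lemma AlgebraicIndependent.update_pow {R A ι : Type*} [CommRing R] [CommRing A] [Algebra R A]
    [DecidableEq ι] {x : ι → A} (hx : AlgebraicIndependent R x) (j : ι) {n : ℕ} (hn : n ≠ 0) :
    AlgebraicIndependent R (Function.update x j (x j ^ n)) := by
  have hX : ∀ i, Transcendental R (Function.update (fun _ => (X : R[X])) j (X ^ n) i) := by
    intro i
    rcases eq_or_ne i j with rfl | hij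
    · simpa using (transcendental_X R).pow (Nat.pos_of_ne_zero hn)
    · simpa [hij] using transcendental_X R
  convert hx.polynomial_aeval_of_transcendental hX using 1
  ext i
  rcases eq_or_ne i j with rfl | hij <;> simp [*]

lemma IsTranscendenceBasis.exists_algHom_comp_eq {F E M ι : Type*} [Field F] [Field E]
    [Field M] [Algebra F E] [Algebra F M] [IsAlgClosed M] {x : ι → E}
    (hx : IsTranscendenceBasis F x) {y : ι → M} (hy : AlgebraicIndependent F y) :
    ∃ σ : E →ₐ[F] M, σ ∘ x = y := by
  have := hx.isAlgebraic_field
  let ψ : IntermediateField.adjoin F (Set.range x) →ₐ[F] M :=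
    (IsFractionRing.liftAlgHom (algebraicIndependent_iff_injective_aeval.1 hy)).comp
      hx.1.reprField
  obtain ⟨σ, hσ⟩ := IsAlgClosed.surjective_domRestrict_of_isAlgebraic (E := E) ψ
  refine ⟨σ, funext fun i => ?_⟩
  have hxi : x i ∈ IntermediateField.adjoin F (Set.range x) :=
    IntermediateField.subset_adjoin _ _ ⟨i, rfl⟩
  have hrepr : hx.1.reprField ⟨x i, hxi⟩ =
      algebraMap (MvPolynomial ι F) (FractionRing (MvPolynomial ι F)) (MvPolynomial.X i) := by
    have hxi_eq : (⟨x i, hxi⟩ : IntermediateField.adjoin F (Set.range x)) =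
        hx.1.aevalEquivField (algebraMap (MvPolynomial ι F) _ (MvPolynomial.X i)) :=
      Subtype.ext (by simp)
    rw [hxi_eq]
    exact hx.1.aevalEquivField.symm_apply_apply _
  calc σ (x i) = ψ ⟨x i, hxi⟩ := by rw [← hσ]; rfl
    _ = y i := by simp [ψ, hrepr]

lemma Transcendental.infinite_range_algHom_apply {F E : Type*} [Field F] [Field E] [Algebra F E]
    {a : E} (ha : Transcendental F a) :
    (Set.range fun σ : E →ₐ[F] AlgebraicClosure E => σ a).Infinite := by
  classical
  obtain ⟨s, has, hs⟩ := exists_isTranscendenceBasis_superset (s := {a})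
    ((algebraicIndependent_singleton_iff ⟨a, rfl⟩).2 ha)
  let j : s := ⟨a, has rfl⟩
  have hpow : ∀ m : ℕ, ∃ σ : E →ₐ[F] AlgebraicClosure E, σ a = algebraMap E _ a ^ (m + 1) := by
    intro m
    obtain ⟨σ, hσ⟩ := hs.exists_algHom_comp_eq <| (hs.1.update_pow j m.succ_ne_zero).map'
      (f := IsScalarTower.toAlgHom F E (AlgebraicClosure E)) (algebraMap E _).injective
    exact ⟨σ, by simpa [j] using congrFun hσ j⟩
  choose σ hσ using hpow
  have hinj : Function.Injective fun m : ℕ => algebraMap E (AlgebraicClosure E) a ^ (m + 1) :=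
    ((transcendental_algebraMap_iff (algebraMap E _).injective).2 ha).injective_pow.comp
      Nat.succ_injective
  exact Set.infinite_of_injective_forall_mem hinj fun m => ⟨σ m, hσ m⟩

section

variable {L K M : Type*} [Field L] [Field K] [Field M] [Algebra L K] [Algebra L M]
  {f : LaurentSeries K} {p : (LaurentSeries L)[X]}

lemma LaurentSeries.isRoot_map_mapRingHom_of_eval₂_eq_zero
    (hpf : eval₂ (mapRingHom (algebraMap L K)) f p = 0) (σ : K →ₐ[L] M) :
    (p.map (mapRingHom (algebraMap L M))).IsRoot (mapRingHom (σ : K →+* M) f) := by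
  have h := congrArg (mapRingHom (σ : K →+* M)) hpf
  rwa [hom_eval₂, map_zero, mapRingHom_comp, σ.comp_algebraMap, ← eval_map] at h

lemma LaurentSeries.finite_range_algHom_apply_coeff
    (hp : p ≠ 0) (hpf : eval₂ (mapRingHom (algebraMap L K)) f p = 0) (n : ℤ) :
    (Set.range fun σ : K →ₐ[L] M => σ (f.coeff n)).Finite := by
  have hroots : (Set.range fun σ : K →ₐ[L] M => mapRingHom (σ : K →+* M) f).Finite :=
    (finite_setOfPred_isRoot ((Polynomial.map_ne_zero_iff (RingHom.injective _)).2 hp)).subset <|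
      Set.range_subset_iff.2 (isRoot_map_mapRingHom_of_eval₂_eq_zero hpf)
  simpa [← Set.range_comp, Function.comp_def] using hroots.image (·.coeff n)

end

/-- Let `K/L` be a field extension and let `f ∈ K((t))` be algebraic over
the subfield `L((t))` (i.e. there is a nonzero polynomial with coefficients in `L((t))`
vanishing at `f`).  Then every coefficient of `f` is algebraic over `L`. -/
theorem coeff_isAlgebraic_of_laurentSeries_isAlgebraic
    {L K : Type*} [Field L] [Field K] [Algebra L K] (f : LaurentSeries K)
    (hf : ∃ p : Polynomial (LaurentSeries L), p ≠ 0 ∧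
      Polynomial.eval₂ (LaurentSeries.mapRingHom (algebraMap L K)) f p = 0) :
    ∀ n : ℤ, IsAlgebraic L (f.coeff n) := by
  intro n
  obtain ⟨p, hp, hpf⟩ := hf
  by_contra ha
  exact (Transcendental.infinite_range_algHom_apply ha)
    (finite_range_algHom_apply_coeff (M := AlgebraicClosure K) hp hpf n)
end

section
/- Let L be a field and ξ an element of an extension field of L that is algebraic over L. Then the Laurent series field L(ξ)((t)) equals L((t))(ξ), and in particular L(ξ)((t)) is a finite extension of L((t)) of degree equal to [L(ξ) : L]. -/
set_option synthInstance.maxHeartbeats 800000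
set_option maxHeartbeats 1000000

/-- `K((t))` is an algebra over `L((t))`, coefficientwise. -/
noncomputable instance laurentSeriesAlgebra {L K : Type*} [Field L] [Field K] [Algebra L K] :
    Algebra (LaurentSeries L) (LaurentSeries K) :=
  (LaurentSeries.mapRingHom (algebraMap L K)).toAlgebra

/-!
A basis `(bᵢ)` of `E` over `L` stays a basis `(C bᵢ)` of `E((t))` over `L((t))`: expanding every
coefficient of a series in `(bᵢ)`, the `i`-th coordinates form its `i`-th coordinate series. Hence for `L(S)` finite over `L`, every series with coefficients in `L(S)` is
an `L((t))`-combination of constants `C x` with `x ∈ L(S)`, and these lie in `L((t))(C '' S)`.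
-/

namespace LaurentSeries

@[simp]
lemma coeff_mapRingHom {R S : Type*} [CommRing R] [CommRing S] (f : R →+* S)
    (x : LaurentSeries R) (n : ℤ) : (mapRingHom f x).coeff n = f (x.coeff n) :=
  rfl

@[simp]
lemma mapRingHom_C {R S : Type*} [CommRing R] [CommRing S] (f : R →+* S) (r : R) :
    mapRingHom f (HahnSeries.C r) = HahnSeries.C (f r) :=
  HahnSeries.map_C r f

section Basis

variable {L E : Type*} [Field L] [Field E] [Algebra L E]

lemma coeff_smul_C (c : LaurentSeries L) (e : E) (n : ℤ) :
    (c • HahnSeries.C e : LaurentSeries E).coeff n = c.coeff n • e := by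
  rw [Algebra.smul_def, HahnSeries.C_apply, HahnSeries.coeff_mul_single_zero,
    RingHom.algebraMap_toAlgebra, coeff_mapRingHom, Algebra.smul_def]

variable {ι : Type*} [Fintype ι] (b : Module.Basis ι L E)

lemma sum_map_coord_smul_C (x : LaurentSeries E) :
    ∑ i, x.map (b.coord i : E →ₗ[L] L) • (HahnSeries.C (b i) : LaurentSeries E) = x := by
  ext n
  simp only [HahnSeries.coeff_sum, coeff_smul_C]
  exact b.sum_repr (x.coeff n)

lemma linearIndependent_C_basis :
    LinearIndependent (LaurentSeries L) (fun i ↦ (HahnSeries.C (b i) : LaurentSeries E)) := by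
  rw [Fintype.linearIndependent_iff]
  intro c hc i
  ext n
  have hcoeff : ∑ j, (c j).coeff n • b j = 0 := by
    simpa only [HahnSeries.coeff_sum, coeff_smul_C, HahnSeries.coeff_zero] using congrArg (HahnSeries.coeff · n) hc
  exact Fintype.linearIndependent_iff.mp b.linearIndependent _ hcoeff i

noncomputable def _root_.Module.Basis.laurentSeries :
    Module.Basis ι (LaurentSeries L) (LaurentSeries E) :=
  .mk (linearIndependent_C_basis b) fun x _ ↦ by
    rw [← sum_map_coord_smul_C b x]
    exact Submodule.sum_mem _ fun i _ ↦ Submodule.smul_mem _ _ (Submodule.subset_span ⟨i, rfl⟩)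

@[simp]
lemma _root_.Module.Basis.laurentSeries_apply (i : ι) :
    b.laurentSeries i = HahnSeries.C (b i) :=
  Module.Basis.mk_apply _ _ i

variable (L E) in
instance finiteDimensional [FiniteDimensional L E] :
    FiniteDimensional (LaurentSeries L) (LaurentSeries E) :=
  .of_basis (Module.finBasis L E).laurentSeries

variable (L E) in
theorem finrank_eq [FiniteDimensional L E] :
    Module.finrank (LaurentSeries L) (LaurentSeries E) = Module.finrank L E := by
  rw [Module.finrank_eq_card_basis (Module.finBasis L E).laurentSeries, Fintype.card_fin]

end Basis

variable {L E E' : Type*} [Field L] [Field E] [Field E'] [Algebra L E] [Algebra L E']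

noncomputable def mapAlgHom (f : E →ₐ[L] E') :
    LaurentSeries E →ₐ[LaurentSeries L] LaurentSeries E' where
  __ := mapRingHom f.toRingHom
  commutes' c := by ext n; exact f.commutes (c.coeff n)

@[simp]
lemma mapAlgHom_apply (f : E →ₐ[L] E') (x : LaurentSeries E) :
    mapAlgHom f x = mapRingHom f.toRingHom x :=
  rfl

end LaurentSeries

namespace IntermediateField

variable {L K : Type*} [Field L] [Field K] [Algebra L K]

/-- `F((t))`, viewed inside `K((t))`. -/
noncomputable def laurentSeries (F : IntermediateField L K) :
    IntermediateField (LaurentSeries L) (LaurentSeries K) :=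
  (LaurentSeries.mapAlgHom F.val).fieldRange

lemma mem_laurentSeries_iff {F : IntermediateField L K} {f : LaurentSeries K} :
    f ∈ F.laurentSeries ↔ ∀ n, f.coeff n ∈ F := by
  refine ⟨fun ⟨g, hg⟩ n ↦ hg ▸ (g.coeff n).2, fun hf ↦ ?_⟩
  refine ⟨{ coeff n := ⟨f.coeff n, hf n⟩, isPWO_support' := f.isPWO_support.mono ?_ }, ?_⟩
  · intro n hn
    simpa [Subtype.ext_iff] using hn
  · ext n
    rfl

lemma C_mem_adjoin_image_C {S : Set K} {x : K} (hx : x ∈ adjoin L S) :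
    (HahnSeries.C x : LaurentSeries K) ∈ adjoin (LaurentSeries L) (HahnSeries.C '' S) := by
  induction hx using adjoin_induction with
  | mem y hy => exact subset_adjoin _ _ ⟨y, hy, rfl⟩
  | algebraMap r =>
    rw [← LaurentSeries.mapRingHom_C]
    exact algebraMap_mem _ (HahnSeries.C r)
  | add y z _ _ hy hz => rw [map_add]; exact add_mem hy hz
  | inv y _ hy => rw [map_inv₀]; exact inv_mem hy
  | mul y z _ _ hy hz => rw [map_mul]; exact mul_mem hy hz

theorem laurentSeries_adjoin (S : Set K) [FiniteDimensional L (adjoin L S)] :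
    (adjoin L S).laurentSeries = adjoin (LaurentSeries L) (HahnSeries.C '' S) := by
  refine le_antisymm ?_ (adjoin_le_iff.mpr ?_)
  · intro f hf
    obtain ⟨g, rfl⟩ := AlgHom.mem_fieldRange.mp hf
    rw [← (Module.finBasis L (adjoin L S)).laurentSeries.sum_repr g, map_sum]
    refine sum_mem fun i _ ↦ ?_
    rw [map_smul, Module.Basis.laurentSeries_apply, LaurentSeries.mapAlgHom_apply]
    refine smul_mem _ ?_
    rw [LaurentSeries.mapRingHom_C]
    exact C_mem_adjoin_image_C (Module.finBasis L (adjoin L S) i).2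
  · rintro _ ⟨s, hs, rfl⟩
    refine mem_laurentSeries_iff.mpr fun n ↦ ?_
    rw [HahnSeries.C_apply, HahnSeries.coeff_single]
    split_ifs
    exacts [subset_adjoin L S hs, zero_mem _]

end IntermediateField

open IntermediateField

/-- Let `ξ` be an element of an extension field `K` of `L` that is algebraic
over `L`.  Viewing everything inside `K((t))`, the Laurent series field `L(ξ)((t))`
(the Laurent series all of whose coefficients lie in `L(ξ)`) equals `L((t))(ξ)`,
and `L(ξ)((t))` is a finite extension of `L((t))` of degree `[L(ξ) : L]`. -/
theorem laurentSeries_adjoin_algebraic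
    {L K : Type*} [Field L] [Field K] [Algebra L K] (ξ : K) (hξ : IsAlgebraic L ξ) :
    ({f : LaurentSeries K | ∀ n : ℤ, f.coeff n ∈ IntermediateField.adjoin L {ξ}}
        = (IntermediateField.adjoin (LaurentSeries L)
            {((HahnSeries.C ξ : LaurentSeries K))} : Set (LaurentSeries K)))
    ∧ FiniteDimensional (LaurentSeries L) (LaurentSeries (IntermediateField.adjoin L {ξ}))
    ∧ Module.finrank (LaurentSeries L) (LaurentSeries (IntermediateField.adjoin L {ξ}))
      = Module.finrank L (IntermediateField.adjoin L {ξ}) := by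
  have : FiniteDimensional L (adjoin L {ξ}) := adjoin.finiteDimensional hξ.isIntegral
  refine ⟨?_, inferInstance, LaurentSeries.finrank_eq _ _⟩
  rw [← Set.image_singleton, ← laurentSeries_adjoin]
  ext f
  exact mem_laurentSeries_iff.symm
end

section
/- Let f : X → Y be a continuous map of topological spaces with finite fibers, and let x_0, x_1, ..., x_d be distinct points of X such that x_i lies in the closure of {x_{i-1}} for all i, and each x_i is isolated in its fiber f^{-1}(f(x_i)). Then the points f(x_0), ..., f(x_d) are pairwise distinct, and f(x_i) lies in the closure of {f(x_{i-1})} for all i. -/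
/-!
Along the chain, `x i ⤳ x j` whenever `i ≤ j`. For `i < j` every open neighbourhood of `x j`
contains `x i`; if `f (x i) = f (x j)`, the neighbourhood isolating `x j` in its fiber would
contain the distinct point `x i` of that fiber. Continuous maps preserve specialization.
-/

open Topology

section

variable {X Y : Type*} [TopologicalSpace X]

theorem Fin.specializes_of_le {d : ℕ} {x : Fin (d + 1) → X}
    (hx : ∀ i : Fin d, x i.castSucc ⤳ x i.succ) {i j : Fin (d + 1)} (hij : i ≤ j) :
    x i ⤳ x j :=
  -- in the specialization order `a ⤳ b` reads `b ≤ a`, so the chain is antitone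
  (Fin.antitone_iff_succ_le (f := Specialization.toEquiv ∘ x)).2 hx hij

theorem Specializes.map_ne_of_isolated_in_fiber {f : X → Y} {x y : X} (h : x ⤳ y) (hne : x ≠ y)
    {U : Set X} (hU : IsOpen U) (hUy : U ∩ f ⁻¹' {f y} = {y}) : f x ≠ f y := by
  intro hfxy
  have hyU : y ∈ U := (hUy.symm ▸ rfl : y ∈ U ∩ f ⁻¹' {f y}).1
  have hx_fiber : x ∈ U ∩ f ⁻¹' {f y} := ⟨h.mem_open hU hyU, hfxy⟩
  rw [hUy] at hx_fiber
  exact hne hx_fiber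

end

theorem images_distinct_of_specialization_chain_general
    {X Y : Type*} [TopologicalSpace X] [TopologicalSpace Y] (f : X → Y)
    (hf : Continuous f)
    (d : ℕ) (x : Fin (d + 1) → X) (hx : Function.Injective x)
    (hspec : ∀ i : Fin d, x i.succ ∈ closure {x i.castSucc})
    (hiso : ∀ i, ∃ U : Set X, IsOpen U ∧ U ∩ f ⁻¹' {f (x i)} = {x i}) :
    Function.Injective (f ∘ x) ∧
      ∀ i : Fin d, f (x i.succ) ∈ closure {f (x i.castSucc)} := by
  have hchain : ∀ i : Fin d, x i.castSucc ⤳ x i.succ := fun i ↦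
    specializes_iff_mem_closure.2 (hspec i)
  refine ⟨Function.Injective.of_lt_imp_ne fun i j hij ↦ ?_, fun i ↦ ?_⟩
  · obtain ⟨U, hU, hUx⟩ := hiso j
    exact (Fin.specializes_of_le hchain hij.le).map_ne_of_isolated_in_fiber
      (hx.ne hij.ne) hU hUx
  · exact specializes_iff_mem_closure.1 ((hchain i).map hf)

/-- Let `f : X → Y` be a continuous map of topological spaces with finite
fibers, and let `x_0, …, x_d` be distinct points of `X` such that `x_i` lies in the closure
of `{x_{i-1}}` and each `x_i` is isolated in its fiber.  Then the images `f(x_0), …, f(x_d)`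
are pairwise distinct and `f(x_i)` lies in the closure of `{f(x_{i-1})}`. -/
theorem images_distinct_of_specialization_chain
    {X Y : Type*} [TopologicalSpace X] [TopologicalSpace Y] (f : X → Y)
    (hf : Continuous f) (hfin : ∀ y : Y, (f ⁻¹' {y}).Finite)
    (d : ℕ) (x : Fin (d + 1) → X) (hx : Function.Injective x)
    (hspec : ∀ i : Fin d, x i.succ ∈ closure {x i.castSucc})
    (hiso : ∀ i, ∃ U : Set X, IsOpen U ∧ U ∩ f ⁻¹' {f (x i)} = {x i}) :
    Function.Injective (f ∘ x) ∧
      ∀ i : Fin d, f (x i.succ) ∈ closure {f (x i.castSucc)} :=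
  images_distinct_of_specialization_chain_general f hf d x hx hspec hiso
end

section
/- Let A be a commutative ring over a field k with a maximal ideal m satisfying A/m ≅ k and m = Nil(A) (the nilradical). Let M be an n×n matrix over A[[t]] of the form M = t^d u(t) · Id_n + N, where u(t) ∈ A[[t]] is a unit and every entry of N lies in m[[t]]. Then there exist an n×n matrix M' over A[[t]], an integer e ≥ 0, and an invertible matrix U(t) ∈ GL_n(A[[t]]) such that M' · M = t^e · U(t). -/
/-!
Reducing modulo `m` kills `N`, so `det M ≡ (t^d u)^n` coefficientwise modulo `m = Nil(A)`.
Splitting off the first `dn` coefficients of the difference gives `det M = t^(dn) v + p` with `v`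
a unit (its constant term is a unit plus a nilpotent) and `p` a polynomial with nilpotent
coefficients, hence nilpotent. If `p^r = 0` then `det M ∣ (t^(dn) v)^r`, and
`M' = c · adj M` with `c · det M = (t^(dn) v)^r` gives `M' M = t^(dnr) v^r · Id`.
-/

open PowerSeries

theorem dvd_pow_of_isNilpotent_sub {R : Type*} [CommRing R] {f g : R}
    (h : IsNilpotent (g - f)) : ∃ r : ℕ, f ∣ g ^ r := by
  obtain ⟨r, hr⟩ := h
  refine ⟨r, ?_⟩
  simpa [hr] using sub_dvd_pow_sub_pow g (g - f) r

theorem RingHom.map_det_smul_one_add {R S n : Type*} [CommRing R] [CommRing S] [Fintype n]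
    [DecidableEq n] (φ : R →+* S) (c : R) (N : Matrix n n R) (hN : N.map φ = 0) :
    φ (c • (1 : Matrix n n R) + N).det = φ c ^ Fintype.card n := by
  have hmap : (c • (1 : Matrix n n R) + N).map φ = φ c • (1 : Matrix n n S) := by
    rw [Matrix.map_add φ (map_add φ), hN, add_zero, Matrix.smul_one_eq_diagonal,
      Matrix.smul_one_eq_diagonal, Matrix.diagonal_map φ.map_zero]
  rw [RingHom.map_det, RingHom.mapMatrix_apply, hmap, Matrix.det_smul, Matrix.det_one, mul_one]

namespace PowerSeries

variable {A : Type*} [CommRing A]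

theorem coeff_det_smul_one_add_sub_pow_mem {n : Type*} [Fintype n] [DecidableEq n]
    (I : Ideal A) (c : A⟦X⟧) (N : Matrix n n A⟦X⟧) (hN : ∀ i j l, coeff l (N i j) ∈ I)
    (l : ℕ) : coeff l ((c • (1 : Matrix n n A⟦X⟧) + N).det - c ^ Fintype.card n) ∈ I := by
  let φ : A⟦X⟧ →+* (A ⧸ I)⟦X⟧ := map (Ideal.Quotient.mk I)
  have hNφ : N.map φ = 0 := by
    ext i j l
    simpa [φ, Ideal.Quotient.eq_zero_iff_mem] using hN i j l
  have hφ : φ ((c • (1 : Matrix n n A⟦X⟧) + N).det - c ^ Fintype.card n) = 0 := by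
    rw [map_sub, φ.map_det_smul_one_add c N hNφ, map_pow, sub_self]
  rw [← Ideal.Quotient.eq_zero_iff_mem, ← coeff_map, hφ, map_zero]

theorem isNilpotent_coe_trunc {f : A⟦X⟧} (hf : ∀ l, IsNilpotent (coeff l f)) (e : ℕ) :
    IsNilpotent (f.trunc e : A⟦X⟧) := by
  have htrunc : IsNilpotent (f.trunc e) := Polynomial.isNilpotent_iff.2 fun l ↦ by
    rw [coeff_trunc]
    split_ifs
    exacts [hf l, IsNilpotent.zero]
  exact htrunc.map Polynomial.coeToPowerSeries.ringHom

theorem exists_isUnit_isNilpotent_X_pow_mul_sub {f w : A⟦X⟧} {e : ℕ} (hw : IsUnit w)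
    (hf : ∀ l, IsNilpotent (coeff l (f - X ^ e * w))) :
    ∃ v : A⟦X⟧, IsUnit v ∧ IsNilpotent (X ^ e * v - f) := by
  set s := f - X ^ e * w
  set h : A⟦X⟧ := mk fun i ↦ coeff (i + e) s
  have hsplit : s = X ^ e * h + (s.trunc e : A⟦X⟧) := eq_X_pow_mul_shift_add_trunc e s
  refine ⟨w + h, ?_, ?_⟩
  · rw [isUnit_iff_constantCoeff, map_add]
    refine IsNilpotent.isUnit_add_left_of_commute ?_ (isUnit_iff_constantCoeff.1 hw)
      (Commute.all _ _)
    simpa [h] using hf e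
  · have hdiff : X ^ e * (w + h) - f = -(s.trunc e : A⟦X⟧) := by
      rw [eq_sub_of_add_eq' hsplit.symm]
      ring
    rw [hdiff]
    exact (isNilpotent_coe_trunc hf e).neg

end PowerSeries

theorem Matrix.exists_mul_eq_smul_one_of_det_dvd {n R : Type*} [Fintype n] [DecidableEq n]
    [CommRing R] {M : Matrix n n R} {c : R} (h : M.det ∣ c) :
    ∃ M' : Matrix n n R, M' * M = c • (1 : Matrix n n R) := by
  obtain ⟨b, rfl⟩ := h
  exact ⟨b • M.adjugate, by rw [smul_mul_assoc, adjugate_mul, smul_smul, mul_comm]⟩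

theorem matrix_mul_eq_pow_smul_unit_general
    {A : Type*} [CommRing A]
    (m : Ideal A) (hnil : m = nilradical A)
    (n d : ℕ) (u : (PowerSeries A)ˣ)
    (N : Matrix (Fin n) (Fin n) (PowerSeries A))
    (hN : ∀ i j : Fin n, ∀ l : ℕ, PowerSeries.coeff l (N i j) ∈ m)
    (M : Matrix (Fin n) (Fin n) (PowerSeries A))
    (hM : M = ((PowerSeries.X : PowerSeries A) ^ d * (u : PowerSeries A)) •
        (1 : Matrix (Fin n) (Fin n) (PowerSeries A)) + N) :
    ∃ (M' : Matrix (Fin n) (Fin n) (PowerSeries A)) (e : ℕ)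
      (U : (Matrix (Fin n) (Fin n) (PowerSeries A))ˣ),
      M' * M = ((PowerSeries.X : PowerSeries A) ^ e) •
        (U : Matrix (Fin n) (Fin n) (PowerSeries A)) := by
  have hdet : ∀ l, IsNilpotent (coeff l (M.det - X ^ (d * n) * (u : A⟦X⟧) ^ n)) := by
    intro l
    have hmem := coeff_det_smul_one_add_sub_pow_mem m (X ^ d * (u : A⟦X⟧)) N hN l
    rwa [Fintype.card_fin, ← hM, mul_pow, ← pow_mul, hnil, mem_nilradical] at hmem
  obtain ⟨v, hv, hnilp⟩ := exists_isUnit_isNilpotent_X_pow_mul_sub (u.isUnit.pow n) hdet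
  obtain ⟨r, hdvd⟩ := dvd_pow_of_isNilpotent_sub hnilp
  obtain ⟨M', hM'⟩ := Matrix.exists_mul_eq_smul_one_of_det_dvd hdvd
  refine ⟨M', d * n * r, Units.map (Matrix.scalar (Fin n)).toMonoidHom (hv.pow r).unit, ?_⟩
  rw [hM', mul_pow, ← pow_mul, mul_smul]
  simp [Matrix.smul_one_eq_diagonal]

/-- Let `A` be a commutative algebra over a field `k` with a maximal ideal
`m` such that `A/m ≅ k` and `m = Nil(A)`.  Let `M` be an `n × n` matrix over `A⟦t⟧` of the
form `M = t^d u(t) · Id + N`, where `u(t)` is a unit of `A⟦t⟧` and all entries of `N` have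
all their coefficients in `m`.  Then there are a matrix `M'` over `A⟦t⟧`, an `e ≥ 0` and an
invertible matrix `U(t)` with `M' · M = t^e · U(t)`. -/
theorem matrix_mul_eq_pow_smul_unit
    {k A : Type*} [Field k] [CommRing A] [Algebra k A]
    (m : Ideal A) (hmax : m.IsMaximal) (hnil : m = nilradical A)
    (hres : Function.Bijective ((Ideal.Quotient.mk m).comp (algebraMap k A)))
    (n d : ℕ) (u : (PowerSeries A)ˣ)
    (N : Matrix (Fin n) (Fin n) (PowerSeries A))
    (hN : ∀ i j : Fin n, ∀ l : ℕ, PowerSeries.coeff l (N i j) ∈ m)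
    (M : Matrix (Fin n) (Fin n) (PowerSeries A))
    (hM : M = ((PowerSeries.X : PowerSeries A) ^ d * (u : PowerSeries A)) •
        (1 : Matrix (Fin n) (Fin n) (PowerSeries A)) + N) :
    ∃ (M' : Matrix (Fin n) (Fin n) (PowerSeries A)) (e : ℕ)
      (U : (Matrix (Fin n) (Fin n) (PowerSeries A))ˣ),
      M' * M = ((PowerSeries.X : PowerSeries A) ^ e) •
        (U : Matrix (Fin n) (Fin n) (PowerSeries A)) :=
  matrix_mul_eq_pow_smul_unit_general m hnil n d u N hN M hM
end

section
/- Let A be a local ring with maximal ideal m such that A/m = k is a field and m = Nil(A), and let f ∈ A[[t]] be a power series whose image in k[[t]] is nonzero. Then f is invertible in the Laurent series ring A((t)). -/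
/-!
Let `n` be the first index with `coeff n f ∉ m`. Since `m = Nil(A)` is maximal, everything outside
it is a unit, so `f = X ^ n * g + p` where `g` has the unit constant coefficient `coeff n f` and the
truncation `p` has nilpotent coefficients, hence is nilpotent. In `A((t))` the term `X ^ n * g` is a
unit, and a unit plus a commuting nilpotent is a unit.
-/

theorem isUnit_of_notMem_nilradical {A : Type*} [CommRing A] (hmax : (nilradical A).IsMaximal)
    {a : A} (ha : a ∉ nilradical A) : IsUnit a := by
  obtain ⟨b, i, hi, hba⟩ := hmax.exists_inv ha
  have hunit : IsUnit (1 + -i) := (mem_nilradical.mp hi).neg.isUnit_one_add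
  rw [← sub_eq_add_neg, ← hba, add_sub_cancel_right] at hunit
  exact isUnit_of_mul_isUnit_right hunit

namespace PowerSeries

variable {A : Type*} [CommRing A]

theorem exists_coeff_notMem_of_map_ne_zero {I : Ideal A} {f : A⟦X⟧}
    (hf : map (Ideal.Quotient.mk I) f ≠ 0) : ∃ n, coeff n f ∉ I := by
  contrapose! hf
  ext n
  simpa [Ideal.Quotient.eq_zero_iff_mem] using hf n

theorem isNilpotent_trunc {f : A⟦X⟧} {n : ℕ} (hf : ∀ i < n, IsNilpotent (coeff i f)) :
    IsNilpotent (trunc n f : A⟦X⟧) := by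
  have htrunc : IsNilpotent (trunc n f) := Polynomial.isNilpotent_iff.mpr fun i ↦ by
    rw [coeff_trunc]
    split_ifs with hi
    · exact hf i hi
    · exact IsNilpotent.zero
  exact htrunc.map Polynomial.coeToPowerSeries.ringHom

theorem isUnit_algebraMap_of_isUnit_coeff (S : Type*) [CommRing S] [Algebra A⟦X⟧ S]
    [IsLocalization.Away (X : A⟦X⟧) S] {f : A⟦X⟧} {n : ℕ}
    (hlt : ∀ i < n, IsNilpotent (coeff i f)) (hn : IsUnit (coeff n f)) :
    IsUnit (algebraMap A⟦X⟧ S f) := by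
  have hshift : IsUnit (mk fun i ↦ coeff (i + n) f) :=
    isUnit_iff_constantCoeff.mpr (by simpa using hn)
  have hlead : IsUnit (algebraMap A⟦X⟧ S (X ^ n * mk fun i ↦ coeff (i + n) f)) := by
    rw [map_mul, map_pow]
    exact ((IsLocalization.Away.algebraMap_isUnit X).pow n).mul (hshift.map _)
  rw [eq_X_pow_mul_shift_add_trunc n f, map_add]
  exact ((isNilpotent_trunc hlt).map _).isUnit_add_left_of_commute hlead (Commute.all _ _)

end PowerSeries

/-- Let `A` be a local ring with maximal ideal `m` such that
`m = Nil(A)`, and let `f ∈ A⟦t⟧` be a power series whose image in `(A/m)⟦t⟧` is nonzero.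
Then `f` is invertible in the Laurent series ring `A((t))`, i.e. in the localization of
`A⟦t⟧` at `t`. -/
theorem isUnit_laurent_of_residue_ne_zero
    {A : Type*} [CommRing A] (m : Ideal A) (hmax : m.IsMaximal) (hnil : m = nilradical A)
    (f : PowerSeries A)
    (hf : PowerSeries.map (Ideal.Quotient.mk m) f ≠ 0) :
    IsUnit (algebraMap (PowerSeries A)
      (Localization.Away (PowerSeries.X : PowerSeries A)) f) := by
  subst hnil
  classical
  have hex := PowerSeries.exists_coeff_notMem_of_map_ne_zero hf
  refine PowerSeries.isUnit_algebraMap_of_isUnit_coeff _ (n := Nat.find hex) (fun i hi ↦ ?_)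
    (isUnit_of_notMem_nilradical hmax (Nat.find_spec hex))
  exact mem_nilradical.mp (not_not.mp (Nat.find_min hex hi))
end
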